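/- arXiv:2507.22497 — 4 statements merged into one kernel-verified Lean document; each statement's English description precedes it below -/
import Mathlib

section
/- Let I be a monomial ideal in k[x_1,…,x_n] with minimal generator exponent vectors m_1,…,m_r, and let μ = μ_I, ν = ν_I, ms = μ − ν. Define φ on the vertex set of EK^{μ}_I by φ(i,k) = (i, k + ν_i) for 1 ≤ k ≤ ms_i. Then φ is an injection into the vertex set {(i,k) : 1 ≤ k ≤ μ_i} of the polarized ring, and φ induces an isomorphism of simplicial complexes EK^{μ_I}_I ≅ K^{𝟙}_{P(I)}: for every σ contained in the vertex set of EK^{μ_I}_I, σ ∈ EK^{μ_I}_I if and only if φ(σ) ∈ K^{𝟙}_{P(I)}, and moreover every face of K^{𝟙}_{P(I)} is of the form φ(σ) for some such σ (in particular no face of K^{𝟙}_{P(I)} contains a vertex (i,k) with k ≤ ν_i). -/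
/-!
Since `ν ≤ m_j ≤ μ`, the shift `k ↦ k + ν_i` carries the interval `(ms_i - (μ_i - m_j i), ms_i]`
onto `(m_j i, μ_i]`. So `φ` maps the facet `F(μ - m_j)` onto the complement of the support of
`P(m_j)` in the polarized vertex set, and faces of `K^𝟙_{P(I)}` are exactly the sets lying in one
of these complements. Such sets lie above `ν` because `ν ≤ m_j`, hence are images under `φ`.
-/

open Set

section Shift

variable {ι : Type*}

def shiftVertex (ν : ι → ℕ) (p : ι × ℕ) : ι × ℕ := (p.1, p.2 + ν p.1)

def unshiftVertex (ν : ι → ℕ) (p : ι × ℕ) : ι × ℕ := (p.1, p.2 - ν p.1)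

theorem shiftVertex_injective (ν : ι → ℕ) : Function.Injective (shiftVertex ν) := by
  rintro ⟨i, k⟩ ⟨i', k'⟩ h
  simp only [shiftVertex, Prod.mk.injEq] at h
  obtain ⟨rfl, h⟩ := h
  simp only [Nat.add_right_cancel h]

theorem image_shiftVertex_image_unshiftVertex [DecidableEq ι] (ν : ι → ℕ)
    {τ : Finset (ι × ℕ)} (hτ : ∀ p ∈ τ, ν p.1 ≤ p.2) :
    (τ.image (unshiftVertex ν)).image (shiftVertex ν) = τ := by
  rw [Finset.image_image]
  refine (Finset.image_congr fun p hp => ?_).trans τ.image_id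
  simp only [Function.comp, shiftVertex, unshiftVertex, id, Nat.sub_add_cancel (hτ p hp)]

theorem forall_mem_Ioc_iff_bounded_and_avoids (τ : Finset (ι × ℕ)) (a b : ι → ℕ) :
    ((∀ p ∈ τ, 1 ≤ p.2 ∧ p.2 ≤ b p.1) ∧ ∀ i k, 1 ≤ k → k ≤ a i → (i, k) ∉ τ) ↔
      ∀ p ∈ τ, p.2 ∈ Ioc (a p.1) (b p.1) := by
  constructor
  · rintro ⟨hbound, havoid⟩ p hp
    exact ⟨lt_of_not_ge fun h => havoid p.1 p.2 (hbound p hp).1 h hp, (hbound p hp).2⟩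
  · intro h
    refine ⟨fun p hp => ⟨(Nat.zero_le _).trans_lt (h p hp).1, (h p hp).2⟩, ?_⟩
    intro i k _ hk hmem
    exact absurd (h _ hmem).1 (not_lt.2 hk)

end Shift

theorem add_mem_Ioc_iff_mem_Ioc_sub {a b c k : ℕ} (hab : a ≤ b) (hbc : b ≤ c) :
    k + a ∈ Ioc b c ↔ k ∈ Ioc (c - a - (c - b)) (c - a) := by
  simp only [mem_Ioc]
  omega

theorem expandedKoszul_iso_koszul_of_polarization_general {n r : ℕ}
    (m : Fin r → Fin n → ℕ)
    (μ ν : Fin n → ℕ)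
    (hμ : ∀ i, IsGreatest (Set.range fun j => m j i) (μ i))
    (hν : ∀ i, IsLeast (Set.range fun j => m j i) (ν i)) :
    let ms : Fin n → ℕ := fun i => μ i - ν i
    let EKmem : Finset (Fin n × ℕ) → Prop := fun σ =>
      ∃ j, ∀ p ∈ σ, ms p.1 - (μ p.1 - m j p.1) < p.2 ∧ p.2 ≤ ms p.1
    let KPmem : Finset (Fin n × ℕ) → Prop := fun σ =>
      (∀ p ∈ σ, 1 ≤ p.2 ∧ p.2 ≤ μ p.1) ∧
        ∃ j, ∀ i : Fin n, ∀ k : ℕ, 1 ≤ k → k ≤ m j i → (i, k) ∉ σ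
    let φ : Fin n × ℕ → Fin n × ℕ := fun p => (p.1, p.2 + ν p.1)
    Function.Injective φ ∧
    (∀ p : Fin n × ℕ, 1 ≤ p.2 → p.2 ≤ ms p.1 → 1 ≤ (φ p).2 ∧ (φ p).2 ≤ μ (φ p).1) ∧
    (∀ σ : Finset (Fin n × ℕ), (∀ p ∈ σ, 1 ≤ p.2 ∧ p.2 ≤ ms p.1) →
      (EKmem σ ↔ KPmem (σ.image φ))) ∧
    (∀ τ : Finset (Fin n × ℕ), KPmem τ →
      (∀ p ∈ τ, ν p.1 < p.2) ∧
      ∃ σ : Finset (Fin n × ℕ), (∀ p ∈ σ, 1 ≤ p.2 ∧ p.2 ≤ ms p.1) ∧ τ = σ.image φ) := by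
  intro ms EKmem KPmem φ
  have hν_le : ∀ j i, ν i ≤ m j i := fun j i => (hν i).2 ⟨j, rfl⟩
  have hle_μ : ∀ j i, m j i ≤ μ i := fun j i => (hμ i).2 ⟨j, rfl⟩
  have hKP : ∀ τ, KPmem τ ↔ ∃ j, ∀ p ∈ τ, p.2 ∈ Ioc (m j p.1) (μ p.1) := fun τ =>
    exists_and_left.symm.trans
      (exists_congr fun j => forall_mem_Ioc_iff_bounded_and_avoids τ (m j) μ)
  refine ⟨shiftVertex_injective ν, fun p h1 h2 => ?_, fun σ _ => ?_, fun τ hτ => ?_⟩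
  · obtain ⟨j, hj⟩ := (hν p.1).1
    have := hle_μ j p.1
    simp only [φ, ms] at h2 ⊢
    omega
  · rw [hKP]
    refine exists_congr fun j => ?_
    rw [Finset.forall_mem_image]
    exact forall₂_congr fun p _ => (add_mem_Ioc_iff_mem_Ioc_sub (hν_le j p.1) (hle_μ j p.1)).symm
  · obtain ⟨j, hj⟩ := (hKP τ).1 hτ
    have hgt : ∀ p ∈ τ, ν p.1 < p.2 := fun p hp => (hν_le j p.1).trans_lt (hj p hp).1
    refine ⟨hgt, τ.image (unshiftVertex ν), ?_,
      (image_shiftVertex_image_unshiftVertex ν fun p hp => (hgt p hp).le).symm⟩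
    rw [Finset.forall_mem_image]
    intro p hp
    have := (hj p hp).2
    have := hgt p hp
    simp only [unshiftVertex, ms]
    omega

/-- Let `I` be a monomial ideal in `k[x_1,…,x_n]` with minimal generator
exponent vectors `m_1,…,m_r`, let `μ = μ_I` (componentwise max), `ν = ν_I` (componentwise
min) and `ms = μ - ν`.  A face of the expanded Koszul complex `EK^{μ}_I` is a subset of a
facet `F(μ - m_j) = {(i,k) : ms_i - (μ_i - m_j i) < k ≤ ms_i}`; a face of
`K^𝟙_{P(I)}` is a subset `σ` of the polarized vertex set `{(i,k) : 1 ≤ k ≤ μ_i}` whose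
complement contains the support `{(i,k) : 1 ≤ k ≤ (m_j)_i}` of some polarized generator.
Define `φ(i,k) = (i, k + ν_i)`.  Then `φ` is an injection of the vertex set of `EK^{μ}_I`
into the vertex set of the polarized ring, and `φ` induces an isomorphism
`EK^{μ_I}_I ≅ K^𝟙_{P(I)}`: for every `σ` contained in the vertex set of `EK^{μ_I}_I`,
`σ ∈ EK^{μ_I}_I` iff `φ(σ) ∈ K^𝟙_{P(I)}`; moreover every face of `K^𝟙_{P(I)}` is of the
form `φ(σ)` for such a `σ` (in particular no face of `K^𝟙_{P(I)}` contains a vertex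
`(i,k)` with `k ≤ ν_i`). -/
theorem expandedKoszul_iso_koszul_of_polarization {n r : ℕ}
    (m : Fin r → Fin n → ℕ)
    (hmin : ∀ j j' : Fin r, m j ≤ m j' → j = j')
    (μ ν : Fin n → ℕ)
    (hμ : ∀ i, IsGreatest (Set.range fun j => m j i) (μ i))
    (hν : ∀ i, IsLeast (Set.range fun j => m j i) (ν i)) :
    let ms : Fin n → ℕ := fun i => μ i - ν i
    let EKmem : Finset (Fin n × ℕ) → Prop := fun σ =>
      ∃ j, ∀ p ∈ σ, ms p.1 - (μ p.1 - m j p.1) < p.2 ∧ p.2 ≤ ms p.1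
    let KPmem : Finset (Fin n × ℕ) → Prop := fun σ =>
      (∀ p ∈ σ, 1 ≤ p.2 ∧ p.2 ≤ μ p.1) ∧
        ∃ j, ∀ i : Fin n, ∀ k : ℕ, 1 ≤ k → k ≤ m j i → (i, k) ∉ σ
    let φ : Fin n × ℕ → Fin n × ℕ := fun p => (p.1, p.2 + ν p.1)
    Function.Injective φ ∧
    (∀ p : Fin n × ℕ, 1 ≤ p.2 → p.2 ≤ ms p.1 → 1 ≤ (φ p).2 ∧ (φ p).2 ≤ μ (φ p).1) ∧
    (∀ σ : Finset (Fin n × ℕ), (∀ p ∈ σ, 1 ≤ p.2 ∧ p.2 ≤ ms p.1) →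
      (EKmem σ ↔ KPmem (σ.image φ))) ∧
    (∀ τ : Finset (Fin n × ℕ), KPmem τ →
      (∀ p ∈ τ, ν p.1 < p.2) ∧
      ∃ σ : Finset (Fin n × ℕ), (∀ p ∈ σ, 1 ≤ p.2 ∧ p.2 ≤ ms p.1) ∧ τ = σ.image φ) :=
  expandedKoszul_iso_koszul_of_polarization_general m μ ν hμ hν
end

section
/- Let I be a monomial ideal in k[x_1,…,x_n] with minimal generator exponent vectors m_1,…,m_r, μ = μ_I, ms = μ_I − ν_I. For α ∈ ℕ^n with α ≤ ms componentwise, let F(α) = ⋃_{i=1}^n {(i,k) : ms_i − α_i < k ≤ ms_i}. Then the simplicial complex generated by the sets F(α), taken over all σ ∈ K^{μ}_I and all α that are maximal (with respect to componentwise order) among those satisfying α ≤ ms, supp(α) = σ, and x^{μ−α} ∈ I, coincides with the simplicial complex generated by the r sets F(μ − m_j), j = 1,…,r. (Equivalently: the two constructions of the expanded Koszul complex EK^{μ_I}_I — step 2 and step 2′ in the paper — yield the same complex.) -/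
/-!
Every `α` in the first family has `x^{μ-α} ∈ I`, i.e. `m_j ≤ μ - α` for some `j`, hence
`α ≤ μ - m_j` and `F(α) ⊆ F(μ - m_j)`. Conversely `μ - m_j` itself satisfies the constraints
(with `σ = supp(μ - m_j)`, which lies in `K^μ_I` because `χ_σ ≤ μ - m_j`), and it lies below a
maximal such vector `α`, as the constraints bound everything by `ms`; then
`F(μ - m_j) ⊆ F(α)`. Since `F` is monotone, the two families generate the same complex.
-/

/-- The indicator (exponent) vector `χ_σ` of a subset `σ ⊆ [n]`. -/
def chi {n : ℕ} (σ : Finset (Fin n)) : Fin n → ℕ := fun i => if i ∈ σ then 1 else 0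

open Finset

def supp {ι : Type*} [Fintype ι] (β : ι → ℕ) : Finset ι := univ.filter (0 < β ·)

theorem mem_supp {ι : Type*} [Fintype ι] {β : ι → ℕ} {i : ι} : i ∈ supp β ↔ 0 < β i := by
  simp [supp]

theorem chi_supp_le {n : ℕ} (β : Fin n → ℕ) : chi (supp β) ≤ β := fun i => by
  by_cases h : i ∈ supp β
  · simp only [chi, h, if_true]
    exact mem_supp.1 h
  · simp [chi, h]

/-- The paper's `F(α)`. -/
def expandedFace {ι : Type*} (ms α : ι → ℕ) : Set (ι × ℕ) :=
  {p | ms p.1 - α p.1 < p.2 ∧ p.2 ≤ ms p.1}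

theorem expandedFace_mono {ι : Type*} (ms : ι → ℕ) : Monotone (expandedFace ms) :=
  fun _ _ h _ hp => ⟨(tsub_le_tsub_left (h _) _).trans_lt hp.1, hp.2⟩

theorem exists_le_maximal_of_forall_le {ι : Type*} [Finite ι] {P : (ι → ℕ) → Prop}
    {b β : ι → ℕ} (hb : ∀ α, P α → α ≤ b) (hβ : P β) : ∃ α, β ≤ α ∧ Maximal P α := by
  have := Fintype.ofFinite ι
  classical
  exact ((Set.finite_Iic b).subset fun α hα => hb α hα).exists_le_maximal hβ

theorem expandedKoszul_two_constructions_agree_general {n r : ℕ}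
    (m : Fin r → Fin n → ℕ)
    (μ ν : Fin n → ℕ)
    (hμ : ∀ i, IsGreatest (Set.range fun j => m j i) (μ i))
    (hν : ∀ i, IsLeast (Set.range fun j => m j i) (ν i)) :
    let ms : Fin n → ℕ := fun i => μ i - ν i
    {τ : Finset (Fin n × ℕ) |
        ∃ σ : Finset (Fin n), ∃ α : Fin n → ℕ,
          (chi σ ≤ μ ∧ ∃ j, m j ≤ μ - chi σ) ∧
          Maximal (fun β : Fin n → ℕ =>
            β ≤ ms ∧ (∀ i, 0 < β i ↔ i ∈ σ) ∧ ∃ j, m j ≤ μ - β) α ∧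
          ∀ p ∈ τ, ms p.1 - α p.1 < p.2 ∧ p.2 ≤ ms p.1}
      = {τ : Finset (Fin n × ℕ) |
          ∃ j, ∀ p ∈ τ, ms p.1 - (μ p.1 - m j p.1) < p.2 ∧ p.2 ≤ ms p.1} := by
  intro ms
  have hmμ : ∀ j, m j ≤ μ := fun j i => (hμ i).2 ⟨j, rfl⟩
  have hνm : ∀ j, ν ≤ m j := fun j i => (hν i).2 ⟨j, rfl⟩
  have hmsμ : ms ≤ μ := fun i => Nat.sub_le _ _
  ext τ
  constructor
  · rintro ⟨σ, α, -, hα, hτ⟩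
    obtain ⟨hαms, -, j, hj⟩ := hα.prop
    have hαmj : α ≤ μ - m j := (le_tsub_iff_le_tsub (hαms.trans hmsμ) (hmμ j)).2 hj
    exact ⟨j, fun p hp => expandedFace_mono ms hαmj (hτ p hp)⟩
  · rintro ⟨j, hτ⟩
    set σ := supp (μ - m j)
    have hχ : chi σ ≤ μ - m j := chi_supp_le _
    have hχμ : chi σ ≤ μ := hχ.trans tsub_le_self
    obtain ⟨α, hα, hmax⟩ := exists_le_maximal_of_forall_le
      (P := fun β => β ≤ ms ∧ (∀ i, 0 < β i ↔ i ∈ σ) ∧ ∃ j, m j ≤ μ - β)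
      (fun _ h => h.1)
      ⟨tsub_le_tsub_left (hνm j) μ, fun _ => mem_supp.symm, j,
        (tsub_tsub_cancel_of_le (hmμ j)).ge⟩
    exact ⟨σ, α, ⟨hχμ, j, (le_tsub_iff_le_tsub hχμ (hmμ j)).1 hχ⟩, hmax,
      fun p hp => expandedFace_mono ms hα (hτ p hp)⟩

/-- Let `I` be a monomial ideal with minimal generator exponent vectors
`m_1,…,m_r`, `μ = μ_I`, `ms = μ_I - ν_I`.  For `α ≤ ms` let
`F(α) = ⋃_i {(i,k) : ms_i - α_i < k ≤ ms_i}`.  Then the simplicial complex generated by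
the sets `F(α)`, taken over all `σ ∈ K^{μ}_I` and all `α` maximal (componentwise) among
those satisfying `α ≤ ms`, `supp(α) = σ` and `x^{μ-α} ∈ I`, coincides with the simplicial
complex generated by the `r` sets `F(μ - m_j)`.  (Equivalently: steps 2 and 2′ of the
construction of the expanded Koszul complex `EK^{μ_I}_I` yield the same complex.) -/
theorem expandedKoszul_two_constructions_agree {n r : ℕ}
    (m : Fin r → Fin n → ℕ)
    (hmin : ∀ j j' : Fin r, m j ≤ m j' → j = j')
    (μ ν : Fin n → ℕ)
    (hμ : ∀ i, IsGreatest (Set.range fun j => m j i) (μ i))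
    (hν : ∀ i, IsLeast (Set.range fun j => m j i) (ν i)) :
    let ms : Fin n → ℕ := fun i => μ i - ν i
    {τ : Finset (Fin n × ℕ) |
        ∃ σ : Finset (Fin n), ∃ α : Fin n → ℕ,
          (chi σ ≤ μ ∧ ∃ j, m j ≤ μ - chi σ) ∧
          Maximal (fun β : Fin n → ℕ =>
            β ≤ ms ∧ (∀ i, 0 < β i ↔ i ∈ σ) ∧ ∃ j, m j ≤ μ - β) α ∧
          ∀ p ∈ τ, ms p.1 - α p.1 < p.2 ∧ p.2 ≤ ms p.1}
      = {τ : Finset (Fin n × ℕ) |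
          ∃ j, ∀ p ∈ τ, ms p.1 - (μ p.1 - m j p.1) < p.2 ∧ p.2 ≤ ms p.1} :=
  expandedKoszul_two_constructions_agree_general m μ ν hμ hν
end

section
/- Let I be a monomial ideal in k[x_1,…,x_n] with minimal generator exponent vectors m_1,…,m_r, μ = μ_I, ms = ms(I) = μ_I − ν_I. For every σ ⊆ [n]: σ belongs to the Koszul complex K^{μ}_I if and only if ms_i ≥ 1 for every i ∈ σ and the set {(i, ms_i) : i ∈ σ} is a face of the expanded Koszul complex EK^{μ}_I. In particular, the map σ ↦ {(i, ms_i) : i ∈ σ} is an isomorphism from K^{μ}_I onto the subcomplex of EK^{μ}_I consisting of its faces contained in the set of top vertices {(i, ms_i) : ms_i ≥ 1}. -/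
/-!
Since `ν ≤ m_j ≤ μ`, both membership conditions reduce to the same statement about a single
generator `m_j`: that `m_j i < μ i` for every `i ∈ σ`. For the Koszul complex this is because
`x^{m_j}` divides `x^{μ - χ_σ}` exactly when `m_j` lies strictly below `μ` on `σ`; for the
expanded complex, the top vertex `(i, ms_i)` lies in the `j`-th facet exactly when
`(m_j - ν)_i < (μ - ν)_i`, which is again `m_j i < μ i`.
-/

theorem chi_le_and_le_sub_chi_iff {n : ℕ} {σ : Finset (Fin n)} {a b : Fin n → ℕ} (hab : a ≤ b) :
    chi σ ≤ b ∧ a ≤ b - chi σ ↔ ∀ i ∈ σ, a i < b i := by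
  constructor
  · rintro ⟨hχ, hsub⟩ i hi
    have h1 := hχ i
    have h2 := hsub i
    simp only [chi, hi, if_true, Pi.sub_apply] at h1 h2
    omega
  · intro hlt
    refine ⟨fun i => ?_, fun i => ?_⟩ <;> by_cases hi : i ∈ σ
    · simpa [chi, hi] using Nat.one_le_of_lt (hlt i hi)
    · simp [chi, hi]
    · simpa [chi, hi] using Nat.le_sub_one_of_lt (hlt i hi)
    · simpa [chi, hi] using hab i

theorem Nat.sub_sub_sub_lt_sub_iff {a b c : ℕ} (hca : c ≤ a) :
    b - c - (b - a) < b - c ↔ a < b := by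
  omega

theorem Finset.image_graph_image_fst {α β : Type*} [DecidableEq α] [DecidableEq β]
    {τ : Finset (α × β)} {f : α → β} (hτ : ∀ p ∈ τ, p.2 = f p.1) :
    (τ.image Prod.fst).image (fun a => (a, f a)) = τ := by
  rw [Finset.image_image]
  conv_rhs => rw [← Finset.image_id (s := τ)]
  exact Finset.image_congr fun p hp => Prod.ext rfl (hτ p hp).symm

theorem koszul_iso_top_subcomplex_of_expandedKoszul_general {n r : ℕ}
    (m : Fin r → Fin n → ℕ)
    (μ ν : Fin n → ℕ)
    (hμ : ∀ i, IsGreatest (Set.range fun j => m j i) (μ i))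
    (hν : ∀ i, IsLeast (Set.range fun j => m j i) (ν i)) :
    let ms : Fin n → ℕ := fun i => μ i - ν i
    let Kmem : Finset (Fin n) → Prop := fun σ => chi σ ≤ μ ∧ ∃ j, m j ≤ μ - chi σ
    let EKmem : Finset (Fin n × ℕ) → Prop := fun τ =>
      ∃ j, ∀ p ∈ τ, ms p.1 - (μ p.1 - m j p.1) < p.2 ∧ p.2 ≤ ms p.1
    let top : Finset (Fin n) → Finset (Fin n × ℕ) := fun σ => σ.image fun i => (i, ms i)
    (∀ σ : Finset (Fin n), Kmem σ ↔ ((∀ i ∈ σ, 1 ≤ ms i) ∧ EKmem (top σ))) ∧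
    (∀ σ σ' : Finset (Fin n), Kmem σ → Kmem σ' → top σ = top σ' → σ = σ') ∧
    (∀ τ : Finset (Fin n × ℕ), EKmem τ → (∀ p ∈ τ, 1 ≤ ms p.1 ∧ p.2 = ms p.1) →
      ∃ σ : Finset (Fin n), Kmem σ ∧ τ = top σ) := by
  intro ms Kmem EKmem top
  have hmμ (j : Fin r) : m j ≤ μ := fun i => (hμ i).2 ⟨j, rfl⟩
  have hνm (j : Fin r) : ν ≤ m j := fun i => (hν i).2 ⟨j, rfl⟩
  have hK (σ : Finset (Fin n)) : Kmem σ ↔ ∃ j, ∀ i ∈ σ, m j i < μ i := by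
    simp only [Kmem, ← exists_and_left, chi_le_and_le_sub_chi_iff (hmμ _)]
  have hEK (σ : Finset (Fin n)) : EKmem (top σ) ↔ ∃ j, ∀ i ∈ σ, m j i < μ i := by
    simp only [EKmem, top, Finset.forall_mem_image, le_refl, and_true, ms,
      Nat.sub_sub_sub_lt_sub_iff (hνm _ _)]
  have hKoszul (σ : Finset (Fin n)) : Kmem σ ↔ (∀ i ∈ σ, 1 ≤ ms i) ∧ EKmem (top σ) := by
    rw [hK, hEK]
    refine ⟨fun ⟨j, hj⟩ => ⟨fun i hi => ?_, j, hj⟩, And.right⟩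
    have h1 : ν i ≤ m j i := hνm j i
    have h2 := hj i hi
    show 1 ≤ μ i - ν i
    omega
  refine ⟨hKoszul, fun σ σ' _ _ hσ => ?_, fun τ hτ htop => ?_⟩
  · exact Finset.image_injective (fun a b hab => congrArg Prod.fst hab) hσ
  · have hτ_top : top (τ.image Prod.fst) = τ :=
      Finset.image_graph_image_fst fun p hp => (htop p hp).2
    refine ⟨τ.image Prod.fst, (hKoszul _).2 ⟨?_, by rwa [hτ_top]⟩, hτ_top.symm⟩
    simpa only [Finset.forall_mem_image] using fun p hp => (htop p hp).1

/-- Let `I` be a monomial ideal with minimal generator exponent vectors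
`m_1,…,m_r`, `μ = μ_I`, `ms = μ_I - ν_I`.  For every `σ ⊆ [n]`: `σ` belongs to the Koszul
complex `K^{μ}_I` iff `ms_i ≥ 1` for every `i ∈ σ` and `{(i, ms_i) : i ∈ σ}` is a face of
the expanded Koszul complex `EK^{μ}_I`.  In particular `σ ↦ {(i, ms_i) : i ∈ σ}` is an
isomorphism from `K^{μ}_I` onto the subcomplex of `EK^{μ}_I` of faces contained in the
set of top vertices `{(i, ms_i) : ms_i ≥ 1}` (the map is injective on `K^{μ}_I` and every
such face of `EK^{μ}_I` arises this way). -/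
theorem koszul_iso_top_subcomplex_of_expandedKoszul {n r : ℕ}
    (m : Fin r → Fin n → ℕ)
    (hmin : ∀ j j' : Fin r, m j ≤ m j' → j = j')
    (μ ν : Fin n → ℕ)
    (hμ : ∀ i, IsGreatest (Set.range fun j => m j i) (μ i))
    (hν : ∀ i, IsLeast (Set.range fun j => m j i) (ν i)) :
    let ms : Fin n → ℕ := fun i => μ i - ν i
    let Kmem : Finset (Fin n) → Prop := fun σ => chi σ ≤ μ ∧ ∃ j, m j ≤ μ - chi σ
    let EKmem : Finset (Fin n × ℕ) → Prop := fun τ =>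
      ∃ j, ∀ p ∈ τ, ms p.1 - (μ p.1 - m j p.1) < p.2 ∧ p.2 ≤ ms p.1
    let top : Finset (Fin n) → Finset (Fin n × ℕ) := fun σ => σ.image fun i => (i, ms i)
    (∀ σ : Finset (Fin n), Kmem σ ↔ ((∀ i ∈ σ, 1 ≤ ms i) ∧ EKmem (top σ))) ∧
    (∀ σ σ' : Finset (Fin n), Kmem σ → Kmem σ' → top σ = top σ' → σ = σ') ∧
    (∀ τ : Finset (Fin n × ℕ), EKmem τ → (∀ p ∈ τ, 1 ≤ ms p.1 ∧ p.2 = ms p.1) →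
      ∃ σ : Finset (Fin n), Kmem σ ∧ τ = top σ) :=
  koszul_iso_top_subcomplex_of_expandedKoszul_general m μ ν hμ hν
end

section
/- Let I be a monomial ideal in k[x_1,…,x_n] with minimal generator exponent vectors m_1,…,m_r and μ = μ_I their componentwise maximum. Let G(I^∨) denote the set of componentwise-minimal elements of {ν ∈ ℕ^n : x^ν ∈ I^∨}, where x^ν ∈ I^∨ iff for every j ∈ {1,…,r} there exists i with (m_j)_i > 0 and ν_i ≥ μ_i + 1 − (m_j)_i. Then the Alexander dual of the polarization P(I) is generated by ⋃_{ν ∈ G(I^∨)} M^ν, where M^ν = {∏_{i ∈ supp(ν)} x_{i,j_i} : 1 ≤ j_i ≤ μ_i + 1 − ν_i for each i ∈ supp(ν)}. Concretely, for a monomial x^β in the polarized variables (β : {(i,k) : 1 ≤ k ≤ μ_i} → ℕ): x^β lies in P(I)^∨ — i.e., for every j there is a pair (i,k) with k ≤ (m_j)_i and β_{(i,k)} ≥ 1 — if and only if there exist ν ∈ G(I^∨) and a choice of indices j_i with 1 ≤ j_i ≤ μ_i + 1 − ν_i and β_{(i,j_i)} ≥ 1 for every i ∈ supp(ν). -/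
/-!
For each variable `x_i`, only the first polarized index `k` with `β (i, k) ≥ 1` matters: the
monomial `x^β` lies in `P(I)^∨` exactly when the exponent vector `ν_β` with
`(ν_β)_i = μ_i + 1 - k` lies in `I^∨`, and `x^β` is a multiple of an element of `M^{ν_β}`.
Passing to a minimal generator `ν ≤ ν_β` of `I^∨` preserves the latter property, since
shrinking `ν` only enlarges the admissible ranges `1 ≤ j_i ≤ μ_i + 1 - ν_i`.
-/

variable {ι J : Type*}

/-- `x^ν ∈ I^∨`, where the minimal generators of `I` have exponents `m j`. -/
def MemAlexanderDual (m : J → ι → ℕ) (μ ν : ι → ℕ) : Prop :=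
  ∀ j, ∃ i, 0 < m j i ∧ μ i + 1 - m j i ≤ ν i

/-- `x^β ∈ P(I)^∨`. -/
def MemPolarizationDual (m : J → ι → ℕ) (β : ι × ℕ → ℕ) : Prop :=
  ∀ j, ∃ i k, 1 ≤ k ∧ k ≤ m j i ∧ 1 ≤ β (i, k)

/-- `x^β` is a multiple of some element of `M^ν`. -/
def IsMultipleOfPolarizedGen (μ ν : ι → ℕ) (β : ι × ℕ → ℕ) : Prop :=
  ∃ c : ι → ℕ, ∀ i, 0 < ν i → 1 ≤ c i ∧ c i ≤ μ i + 1 - ν i ∧ 1 ≤ β (i, c i)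

theorem IsMultipleOfPolarizedGen.anti {μ ν ν' : ι → ℕ} {β : ι × ℕ → ℕ} (hle : ν' ≤ ν)
    (h : IsMultipleOfPolarizedGen μ ν β) : IsMultipleOfPolarizedGen μ ν' β := by
  obtain ⟨c, hc⟩ := h
  refine ⟨c, fun i hi => ?_⟩
  obtain ⟨h1, h2, h3⟩ := hc i (hi.trans_le (hle i))
  exact ⟨h1, h2.trans (Nat.sub_le_sub_left (hle i) _), h3⟩

theorem MemAlexanderDual.memPolarizationDual {m : J → ι → ℕ} {μ ν : ι → ℕ}
    {β : ι × ℕ → ℕ} (hmμ : ∀ j i, m j i ≤ μ i) (hν : MemAlexanderDual m μ ν)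
    (hβ : IsMultipleOfPolarizedGen μ ν β) : MemPolarizationDual m β := by
  obtain ⟨c, hc⟩ := hβ
  intro j
  obtain ⟨i, hmi, hνi⟩ := hν j
  have := hmμ j i
  obtain ⟨h1, h2, h3⟩ := hc i (by omega)
  exact ⟨i, c i, h1, by omega, h3⟩

/-- The exponent vector `ν_β`: `(ν_β)_i = μ_i + 1 - k` for the least `k ∈ [1, μ_i]` with
`β (i, k) ≥ 1`, and `0` if there is no such `k`. -/
def polarDepth (μ : ι → ℕ) (β : ι × ℕ → ℕ) (i : ι) : ℕ :=
  ((Finset.Icc 1 (μ i)).filter fun k => 1 ≤ β (i, k)).sup fun k => μ i + 1 - k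

theorem le_polarDepth {μ : ι → ℕ} {β : ι × ℕ → ℕ} {i : ι} {k : ℕ} (hk : 1 ≤ k)
    (hkμ : k ≤ μ i) (hβ : 1 ≤ β (i, k)) : μ i + 1 - k ≤ polarDepth μ β i :=
  Finset.le_sup (f := fun k => μ i + 1 - k) (by simp [hk, hkμ, hβ])

theorem isMultipleOfPolarizedGen_polarDepth (μ : ι → ℕ) (β : ι × ℕ → ℕ) :
    IsMultipleOfPolarizedGen μ (polarDepth μ β) β := by
  refine ⟨fun i => μ i + 1 - polarDepth μ β i, fun i hi => ?_⟩
  have hne : ((Finset.Icc 1 (μ i)).filter fun k => 1 ≤ β (i, k)).Nonempty :=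
    Finset.nonempty_iff_ne_empty.2 fun h => by simp [polarDepth, h] at hi
  obtain ⟨k, hk, hsup⟩ := Finset.exists_mem_eq_sup _ hne fun k => μ i + 1 - k
  simp only [Finset.mem_filter, Finset.mem_Icc] at hk
  obtain ⟨⟨hk1, hkμ⟩, hβ⟩ := hk
  have hdepth : polarDepth μ β i = μ i + 1 - k := hsup
  have hck : μ i + 1 - polarDepth μ β i = k := by omega
  simp only [hck]
  exact ⟨hk1, le_rfl, hβ⟩

theorem MemPolarizationDual.memAlexanderDual_polarDepth {m : J → ι → ℕ} {μ : ι → ℕ}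
    {β : ι × ℕ → ℕ} (hmμ : ∀ j i, m j i ≤ μ i) (h : MemPolarizationDual m β) :
    MemAlexanderDual m μ (polarDepth μ β) := by
  intro j
  obtain ⟨i, k, hk, hkm, hβ⟩ := h j
  exact ⟨i, by omega,
    (Nat.sub_le_sub_left hkm _).trans (le_polarDepth hk (hkm.trans (hmμ j i)) hβ)⟩

theorem alexanderDual_of_polarization_general {n r : ℕ}
    (m : Fin r → Fin n → ℕ)
    (μ : Fin n → ℕ)
    (hμ : ∀ i, IsGreatest (Set.range fun j => m j i) (μ i))
    (β : Fin n × ℕ → ℕ) :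
    (∀ j : Fin r, ∃ (i : Fin n) (k : ℕ), 1 ≤ k ∧ k ≤ m j i ∧ 1 ≤ β (i, k))
      ↔ ∃ ν : Fin n → ℕ,
          Minimal (fun ν' : Fin n → ℕ =>
            ∀ j : Fin r, ∃ i : Fin n, 0 < m j i ∧ μ i + 1 - m j i ≤ ν' i) ν ∧
          ∃ c : Fin n → ℕ, ∀ i : Fin n, 0 < ν i →
            1 ≤ c i ∧ c i ≤ μ i + 1 - ν i ∧ 1 ≤ β (i, c i) := by
  have hmμ : ∀ j i, m j i ≤ μ i := fun j i => (hμ i).2 ⟨j, rfl⟩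
  constructor
  · intro h
    obtain ⟨ν, hle, hmin⟩ := exists_minimal_le_of_wellFoundedLT (MemAlexanderDual m μ)
      (polarDepth μ β) (MemPolarizationDual.memAlexanderDual_polarDepth hmμ h)
    exact ⟨ν, hmin, (isMultipleOfPolarizedGen_polarDepth μ β).anti hle⟩
  · rintro ⟨ν, hmin, hβ⟩
    exact MemAlexanderDual.memPolarizationDual hmμ hmin.prop hβ

/-- Let `I` be a monomial ideal in `k[x_1,…,x_n]` with minimal generator
exponent vectors `m_1,…,m_r` and `μ = μ_I` their componentwise maximum.  Let `G(I^∨)` be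
the set of componentwise-minimal elements of `{ν : x^ν ∈ I^∨}`, where `x^ν ∈ I^∨` iff for
every `j` there exists `i` with `(m_j)_i > 0` and `ν_i ≥ μ_i + 1 - (m_j)_i`.  Then the
Alexander dual of the polarization `P(I)` is generated by `⋃_{ν ∈ G(I^∨)} M^ν`, where
`M^ν = {∏_{i ∈ supp ν} x_{i,j_i} : 1 ≤ j_i ≤ μ_i + 1 - ν_i}`.  Concretely, for a monomial
`x^β` in the polarized variables: `x^β ∈ P(I)^∨` — i.e. for every `j` there is a pair
`(i,k)` with `1 ≤ k ≤ (m_j)_i` and `β_{(i,k)} ≥ 1` — iff there exist `ν ∈ G(I^∨)` and a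
choice of indices `j_i` with `1 ≤ j_i ≤ μ_i + 1 - ν_i` and `β_{(i,j_i)} ≥ 1` for every
`i ∈ supp ν`. -/
theorem alexanderDual_of_polarization {n r : ℕ}
    (m : Fin r → Fin n → ℕ)
    (hmin : ∀ j j' : Fin r, m j ≤ m j' → j = j')
    (μ : Fin n → ℕ)
    (hμ : ∀ i, IsGreatest (Set.range fun j => m j i) (μ i))
    (β : Fin n × ℕ → ℕ) :
    (∀ j : Fin r, ∃ (i : Fin n) (k : ℕ), 1 ≤ k ∧ k ≤ m j i ∧ 1 ≤ β (i, k))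
      ↔ ∃ ν : Fin n → ℕ,
          Minimal (fun ν' : Fin n → ℕ =>
            ∀ j : Fin r, ∃ i : Fin n, 0 < m j i ∧ μ i + 1 - m j i ≤ ν' i) ν ∧
          ∃ c : Fin n → ℕ, ∀ i : Fin n, 0 < ν i →
            1 ≤ c i ∧ c i ≤ μ i + 1 - ν i ∧ 1 ≤ β (i, c i) :=
  alexanderDual_of_polarization_general m μ hμ β
end
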